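/- arXiv:1204.2104 — 2 statements merged into one kernel-verified Lean document; each statement's English description precedes it below -/
import Mathlib

section
/- Let α₁, α₂ > 0 be real numbers, let Q : ℝ⁴ → ℝ be Q(x) = (α₁/2)(x₁² + x₂²) + (α₂/2)(x₃² + x₄²), and let γ = −log ∘ Q on ℝ⁴ \ {0} (note Q > 0 there). Then the equation Δγ(x) + ‖∇γ(x)‖² = 0 holds for every x ∈ ℝ⁴ \ {0} if and only if α₁ = α₂. (This is the characterization in the paper's Example 5.2 for complex dimension n = 2: among the candidate conformal factors γ = (1/(n−3)) log(Σ_k (α_k/2)(x_{2k−1}² + x_{2k}²)), the biharmonicity equation Δγ + (n−1)|∇γ|² = 0 is satisfied precisely when the rotation coefficients are equal.) -/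
/-!
For `γ = -log Q` one has `∇γ = -∇Q / Q` and `Δγ = ‖∇Q‖² / Q² - ΔQ / Q`, so
`Δγ + ‖∇γ‖² = (2‖∇Q‖² - Q ΔQ) / Q²`. For the diagonal quadratic form
`Q = Σ dᵢ xᵢ² / 2` this numerator is `2 Σ dᵢ² xᵢ² - Q Σ dᵢ`, which for
`d = (α₁, α₁, α₂, α₂)` factors as `(α₁ - α₂)(α₁(x₁² + x₂²) - α₂(x₃² + x₄²))`.
It vanishes identically when `α₁ = α₂`, and at `x = e₁` it equals `(α₁ - α₂) α₁`.
-/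

/-- The Laplacian of `ψ` with respect to an orthonormal basis `b` of `E`:
`Δψ(x) = Σ_i D²ψ(x)(bᵢ, bᵢ)`. -/
noncomputable def lap {E : Type*} [NormedAddCommGroup E] [InnerProductSpace ℝ E]
    {F : Type*} [NormedAddCommGroup F] [NormedSpace ℝ F]
    {ι : Type*} [Fintype ι] (b : OrthonormalBasis ι ℝ E) (ψ : E → F) (x : E) : F :=
  ∑ i, fderiv ℝ (fderiv ℝ ψ) x (b i) (b i)

open Filter Topology

section Laplacian

variable {E : Type*} [NormedAddCommGroup E] [InnerProductSpace ℝ E]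
  {ι : Type*} [Fintype ι] (b : OrthonormalBasis ι ℝ E) {x : E}

theorem lap_congr_of_eventuallyEq {F : Type*} [NormedAddCommGroup F] [NormedSpace ℝ F]
    {ψ φ : E → F} (h : ψ =ᶠ[𝓝 x] φ) : lap b ψ x = lap b φ x := by
  simp only [lap, h.fderiv.fderiv_eq]

theorem norm_gradient_sq_eq_sum [CompleteSpace E] (f : E → ℝ) (x : E) :
    ‖gradient f x‖ ^ 2 = ∑ i, fderiv ℝ f x (b i) ^ 2 := by
  rw [gradient, LinearIsometryEquiv.norm_map, b.norm_dual]

variable {f : E → ℝ}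

theorem lap_comp {g g' : ℝ → ℝ} {g'' : ℝ} (hf : ContDiffAt ℝ 2 f x)
    (hg : ∀ᶠ t in 𝓝 (f x), HasDerivAt g (g' t) t) (hg' : HasDerivAt g' g'' (f x)) :
    lap b (fun y => g (f y)) x =
      g'' * ∑ i, fderiv ℝ f x (b i) ^ 2 + g' (f x) * lap b f x := by
  have hfd : ∀ᶠ y in 𝓝 x, DifferentiableAt ℝ f y :=
    (hf.eventually (by simp)).mono fun y hy => hy.differentiableAt two_ne_zero
  have hfderiv : fderiv ℝ (fun y => g (f y)) =ᶠ[𝓝 x] fun y => g' (f y) • fderiv ℝ f y := by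
    filter_upwards [hfd, hf.continuousAt.eventually hg] with y hfy hgy
    exact (hgy.comp_hasFDerivAt y hfy.hasFDerivAt).fderiv
  have hsecond : HasFDerivAt (fun y => g' (f y) • fderiv ℝ f y)
      (g' (f x) • fderiv ℝ (fderiv ℝ f) x + (g'' • fderiv ℝ f x).smulRight (fderiv ℝ f x)) x :=
    (hg'.comp_hasFDerivAt x (hf.differentiableAt two_ne_zero).hasFDerivAt).smul
      ((hf.fderiv_right (m := 1) le_rfl).differentiableAt one_ne_zero).hasFDerivAt
  rw [lap, hfderiv.fderiv_eq, hsecond.fderiv, lap]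
  simp [Finset.sum_add_distrib, Finset.mul_sum, sq]
  ring_nf

theorem lap_neg_log_add_norm_gradient_sq [CompleteSpace E] (hf : ContDiffAt ℝ 2 f x)
    (hx : f x ≠ 0) :
    lap b (fun y => -Real.log (f y)) x + ‖gradient (fun y => -Real.log (f y)) x‖ ^ 2 =
      (2 * ‖gradient f x‖ ^ 2 - f x * lap b f x) / f x ^ 2 := by
  have hlog : ∀ᶠ t in 𝓝 (f x), HasDerivAt (fun t => -Real.log t) (-t⁻¹) t :=
    (eventually_ne_nhds hx).mono fun t ht => (Real.hasDerivAt_log ht).neg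
  have hinv : HasDerivAt (fun t : ℝ => -t⁻¹) (-(-(f x ^ 2)⁻¹)) (f x) := (hasDerivAt_inv hx).neg
  have hfderiv : fderiv ℝ (fun y => -Real.log (f y)) x = (-(f x)⁻¹) • fderiv ℝ f x :=
    (hlog.self_of_nhds.comp_hasFDerivAt x
      (hf.differentiableAt two_ne_zero).hasFDerivAt).fderiv
  rw [lap_comp b hf hlog hinv, norm_gradient_sq_eq_sum b, norm_gradient_sq_eq_sum b, hfderiv]
  simp only [smul_apply, smul_eq_mul, mul_pow, ← Finset.mul_sum]
  field_simp
  ring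

end Laplacian

section DiagonalQuadratic

variable {ι : Type*} [Fintype ι] (d : ι → ℝ)

noncomputable def diagonalBilin : EuclideanSpace ℝ ι →L[ℝ] EuclideanSpace ℝ ι →L[ℝ] ℝ :=
  ∑ i, d i • (EuclideanSpace.proj i).smulRight (EuclideanSpace.proj i)

theorem diagonalBilin_apply (v w : EuclideanSpace ℝ ι) :
    diagonalBilin d v w = ∑ i, d i * v i * w i := by
  simp [diagonalBilin, mul_assoc]

theorem hasFDerivAt_sum_mul_sq (x : EuclideanSpace ℝ ι) :
    HasFDerivAt (fun y : EuclideanSpace ℝ ι => ∑ i, d i / 2 * y i ^ 2) (diagonalBilin d x) x := by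
  have hterm (i : ι) := ((PiLp.hasFDerivAt_apply (𝕜 := ℝ) 2 x i).pow 2).const_mul (d i / 2)
  have hsum : HasFDerivAt (fun y : EuclideanSpace ℝ ι => ∑ i, d i / 2 * y i ^ 2)
      (∑ i, (d i / 2) • (2 • x i ^ (2 - 1)) • EuclideanSpace.proj i) x :=
    HasFDerivAt.fun_sum fun i _ => hterm i
  refine hsum.congr_fderiv (ContinuousLinearMap.ext fun v => ?_)
  simp only [diagonalBilin_apply]
  simp
  exact Finset.sum_congr rfl fun i _ => by ring

theorem contDiff_sum_mul_sq :
    ContDiff ℝ 2 (fun y : EuclideanSpace ℝ ι => ∑ i, d i / 2 * y i ^ 2) := by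
  fun_prop

variable [DecidableEq ι]

theorem lap_sum_mul_sq (x : EuclideanSpace ℝ ι) :
    lap (EuclideanSpace.basisFun ι ℝ) (fun y : EuclideanSpace ℝ ι => ∑ i, d i / 2 * y i ^ 2) x =
      ∑ i, d i := by
  have hfderiv :
      fderiv ℝ (fun y : EuclideanSpace ℝ ι => ∑ i, d i / 2 * y i ^ 2) = diagonalBilin d :=
    funext fun y => (hasFDerivAt_sum_mul_sq d y).fderiv
  simp [lap, hfderiv, diagonalBilin_apply]

theorem norm_gradient_sum_mul_sq_sq (x : EuclideanSpace ℝ ι) :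
    ‖gradient (fun y : EuclideanSpace ℝ ι => ∑ i, d i / 2 * y i ^ 2) x‖ ^ 2 =
      ∑ i, (d i * x i) ^ 2 := by
  simp [norm_gradient_sq_eq_sum (EuclideanSpace.basisFun ι ℝ),
    (hasFDerivAt_sum_mul_sq d x).fderiv, diagonalBilin_apply]

end DiagonalQuadratic

theorem example_C2_characterization_general
    (α₁ α₂ : ℝ) (h₁ : 0 < α₁)
    (Q : EuclideanSpace ℝ (Fin 4) → ℝ)
    (hQ : ∀ x : EuclideanSpace ℝ (Fin 4),
      Q x = α₁ / 2 * (x 0 ^ 2 + x 1 ^ 2) + α₂ / 2 * (x 2 ^ 2 + x 3 ^ 2))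
    (γ : EuclideanSpace ℝ (Fin 4) → ℝ)
    (hγ : ∀ x : EuclideanSpace ℝ (Fin 4), x ≠ 0 → γ x = -Real.log (Q x)) :
    (∀ x : EuclideanSpace ℝ (Fin 4), x ≠ 0 →
        lap (EuclideanSpace.basisFun (Fin 4) ℝ) γ x + ‖gradient γ x‖ ^ 2 = 0)
      ↔ α₁ = α₂ := by
  have hQ_diag : Q = fun y => ∑ i, ![α₁, α₁, α₂, α₂] i / 2 * y i ^ 2 :=
    funext fun y => by rw [hQ, Fin.sum_univ_four]; simp; ring
  have hdefect : ∀ x, x ≠ 0 → Q x ≠ 0 →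
      lap (EuclideanSpace.basisFun (Fin 4) ℝ) γ x + ‖gradient γ x‖ ^ 2 =
        (α₁ - α₂) * (α₁ * (x 0 ^ 2 + x 1 ^ 2) - α₂ * (x 2 ^ 2 + x 3 ^ 2)) / Q x ^ 2 := by
    intro x hx hQx
    have hγ_near : γ =ᶠ[𝓝 x] fun y => -Real.log (Q y) := (eventually_ne_nhds hx).mono hγ
    rw [lap_congr_of_eventuallyEq _ hγ_near, hγ_near.gradient_eq,
      lap_neg_log_add_norm_gradient_sq _ (hQ_diag ▸ (contDiff_sum_mul_sq _).contDiffAt) hQx,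
      hQ_diag, lap_sum_mul_sq, norm_gradient_sum_mul_sq_sq]
    simp [Fin.sum_univ_four]
    ring
  constructor
  · intro h
    set e₀ : EuclideanSpace ℝ (Fin 4) := EuclideanSpace.single 0 1
    have he₀ : e₀ ≠ 0 := by simp [e₀]
    have hQe₀ : Q e₀ = α₁ / 2 := by simp [hQ, e₀]
    have hzero := h e₀ he₀
    rw [hdefect e₀ he₀ (by rw [hQe₀]; positivity), hQe₀] at hzero
    simpa [e₀, h₁.ne', sub_eq_zero] using hzero
  · rintro rfl x hx
    have hQx : Q x = α₁ / 2 * ‖x‖ ^ 2 := by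
      rw [hQ, EuclideanSpace.real_norm_sq_eq, Fin.sum_univ_four]; ring
    have hQx_ne : Q x ≠ 0 := by rw [hQx]; positivity
    rw [hdefect x hx hQx_ne, sub_self, zero_mul, zero_div]

/-- Example 5.2 of the paper, complex dimension n = 2: with
`Q(x) = (α₁/2)(x₁² + x₂²) + (α₂/2)(x₃² + x₄²)` and `γ = -log ∘ Q` on `ℝ⁴ \ {0}`,
the equation `Δγ + ‖∇γ‖² = 0` holds on `ℝ⁴ \ {0}` iff `α₁ = α₂`. -/
theorem example_C2_characterization
    (α₁ α₂ : ℝ) (h₁ : 0 < α₁) (h₂ : 0 < α₂)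
    (Q : EuclideanSpace ℝ (Fin 4) → ℝ)
    (hQ : ∀ x : EuclideanSpace ℝ (Fin 4),
      Q x = α₁ / 2 * (x 0 ^ 2 + x 1 ^ 2) + α₂ / 2 * (x 2 ^ 2 + x 3 ^ 2))
    (γ : EuclideanSpace ℝ (Fin 4) → ℝ)
    (hγ : ∀ x : EuclideanSpace ℝ (Fin 4), x ≠ 0 → γ x = -Real.log (Q x)) :
    (∀ x : EuclideanSpace ℝ (Fin 4), x ≠ 0 →
        lap (EuclideanSpace.basisFun (Fin 4) ℝ) γ x + ‖gradient γ x‖ ^ 2 = 0)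
      ↔ α₁ = α₂ :=
  example_C2_characterization_general α₁ α₂ h₁ Q hQ γ hγ
end

section
/- Let α₁, α₂, α₃ be real numbers and let γ : ℝ⁶ → ℝ be γ(x) = Σ_{k=1}^{3} (α_k/2)(x_{2k−1}² + x_{2k}²). Then the equation Δγ(x) + 2‖∇γ(x)‖² = 0 holds for every x ∈ ℝ⁶ if and only if α₁ = α₂ = α₃ = 0. (This is the n = 3 case of the paper's Example 5.2: in complex dimension 3 the candidate conformal factor γ = Σ_k (α_k/2)(x_{2k−1}² + x_{2k}²) solves the equation Δγ + (n−1)|∇γ|² = 0 only in the trivial, Kähler, case.) -/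
open RealInnerProductSpace

namespace LinearMap.IsSymmetric

variable {E : Type*} [NormedAddCommGroup E] [InnerProductSpace ℝ E] {T : E →L[ℝ] E}

theorem hasFDerivAt_half_inner_self (hT : (T : E →ₗ[ℝ] E).IsSymmetric) (x : E) :
    HasFDerivAt (fun y => ⟪T y, y⟫ / 2) (innerSL ℝ (T x)) x :=
  ((hT.hasStrictFDerivAt_reApplyInnerSelf x).hasFDerivAt.mul_const (2⁻¹ : ℝ)).congr_fderiv
    (by ext v; simp)

theorem fderiv_half_inner_self (hT : (T : E →ₗ[ℝ] E).IsSymmetric) :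
    fderiv ℝ (fun y => ⟪T y, y⟫ / 2) = ⇑((innerSL ℝ).comp T) :=
  funext fun x => (hT.hasFDerivAt_half_inner_self x).fderiv

theorem gradient_half_inner_self [CompleteSpace E] (hT : (T : E →ₗ[ℝ] E).IsSymmetric) (x : E) :
    gradient (fun y => ⟪T y, y⟫ / 2) x = T x :=
  (hasGradientAt_iff_hasFDerivAt.mpr (hT.hasFDerivAt_half_inner_self x)).gradient

theorem lap_half_inner_self {ι : Type*} [Fintype ι] (b : OrthonormalBasis ι ℝ E)
    (hT : (T : E →ₗ[ℝ] E).IsSymmetric) (x : E) :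
    lap b (fun y => ⟪T y, y⟫ / 2) x = ∑ i, ⟪T (b i), b i⟫ := by
  rw [lap, hT.fderiv_half_inner_self, ContinuousLinearMap.fderiv]
  simp

end LinearMap.IsSymmetric

open Matrix

section Diagonal

variable {ι : Type*} [Fintype ι] [DecidableEq ι] (c : ι → ℝ)

theorem Matrix.isSymmetric_toEuclideanCLM_diagonal :
    ((toEuclideanCLM (𝕜 := ℝ) (diagonal c) : _ →L[ℝ] _) : EuclideanSpace ℝ ι →ₗ[ℝ] _).IsSymmetric :=
  isSymmetric_toEuclideanLin_iff.mpr (isHermitian_diagonal c)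

theorem Matrix.inner_toEuclideanCLM_diagonal_self (x : EuclideanSpace ℝ ι) :
    ⟪toEuclideanCLM (𝕜 := ℝ) (diagonal c) x, x⟫ = ∑ i, c i * x i ^ 2 := by
  rw [real_inner_comm, inner_toEuclideanCLM]
  simp only [dotProduct, mulVec_diagonal]
  exact Finset.sum_congr rfl fun i _ => by ring

theorem Matrix.inner_toEuclideanCLM_diagonal_basisFun (i : ι) :
    ⟪toEuclideanCLM (𝕜 := ℝ) (diagonal c) (EuclideanSpace.basisFun ι ℝ i),
      EuclideanSpace.basisFun ι ℝ i⟫ = c i := by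
  simp [inner_toEuclideanCLM_diagonal_self]

theorem Matrix.norm_toEuclideanCLM_diagonal_sq (x : EuclideanSpace ℝ ι) :
    ‖toEuclideanCLM (𝕜 := ℝ) (diagonal c) x‖ ^ 2 = ∑ i, (c i * x i) ^ 2 := by
  simp [EuclideanSpace.norm_sq_eq, mulVec_diagonal, mul_pow]

noncomputable def diagonalQuadratic (x : EuclideanSpace ℝ ι) : ℝ := ∑ i, c i / 2 * x i ^ 2

theorem diagonalQuadratic_eq_half_inner_self :
    diagonalQuadratic c = fun y => ⟪toEuclideanCLM (𝕜 := ℝ) (diagonal c) y, y⟫ / 2 := by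
  funext y
  rw [diagonalQuadratic, inner_toEuclideanCLM_diagonal_self, Finset.sum_div]
  exact Finset.sum_congr rfl fun i _ => by ring

theorem lap_diagonalQuadratic (x : EuclideanSpace ℝ ι) :
    lap (EuclideanSpace.basisFun ι ℝ) (diagonalQuadratic c) x = ∑ i, c i := by
  simp only [diagonalQuadratic_eq_half_inner_self,
    (isSymmetric_toEuclideanCLM_diagonal c).lap_half_inner_self,
    inner_toEuclideanCLM_diagonal_basisFun]

theorem norm_gradient_diagonalQuadratic_sq (x : EuclideanSpace ℝ ι) :
    ‖gradient (diagonalQuadratic c) x‖ ^ 2 = ∑ i, (c i * x i) ^ 2 := by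
  rw [diagonalQuadratic_eq_half_inner_self,
    (isSymmetric_toEuclideanCLM_diagonal c).gradient_half_inner_self,
    norm_toEuclideanCLM_diagonal_sq]

theorem lap_add_mul_norm_gradient_sq_diagonalQuadratic_eq_zero_iff {k : ℝ} (hk : 0 < k) :
    (∀ x, lap (EuclideanSpace.basisFun ι ℝ) (diagonalQuadratic c) x
        + k * ‖gradient (diagonalQuadratic c) x‖ ^ 2 = 0)
      ↔ c = 0 := by
  simp only [lap_diagonalQuadratic, norm_gradient_diagonalQuadratic_sq]
  constructor
  · intro h
    have hsum : ∑ i, c i = 0 := by simpa using h 0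
    funext j
    simpa [hsum, hk.ne'] using h (EuclideanSpace.single j 1)
  · rintro rfl x
    simp

end Diagonal

/-- Example 5.2 of the paper, complex dimension n = 3: the candidate conformal
factor `γ(x) = Σ_{k=1}^{3} (α_k/2)(x_{2k-1}² + x_{2k}²)` on `ℝ⁶` satisfies
`Δγ + 2‖∇γ‖² = 0` everywhere iff `α₁ = α₂ = α₃ = 0`. -/
theorem example_C3_trivial
    (α₁ α₂ α₃ : ℝ)
    (γ : EuclideanSpace ℝ (Fin 6) → ℝ)
    (hγ : ∀ x : EuclideanSpace ℝ (Fin 6),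
      γ x = α₁ / 2 * (x 0 ^ 2 + x 1 ^ 2) + α₂ / 2 * (x 2 ^ 2 + x 3 ^ 2)
            + α₃ / 2 * (x 4 ^ 2 + x 5 ^ 2)) :
    (∀ x : EuclideanSpace ℝ (Fin 6),
        lap (EuclideanSpace.basisFun (Fin 6) ℝ) γ x + 2 * ‖gradient γ x‖ ^ 2 = 0)
      ↔ (α₁ = 0 ∧ α₂ = 0 ∧ α₃ = 0) := by
  have hγ_diag : γ = diagonalQuadratic ![α₁, α₁, α₂, α₂, α₃, α₃] := by
    funext y
    rw [hγ, diagonalQuadratic, Fin.sum_univ_six]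
    simp only [Matrix.cons_val]
    ring
  rw [hγ_diag, lap_add_mul_norm_gradient_sq_diagonalQuadratic_eq_zero_iff _ two_pos]
  simp [funext_iff, Fin.forall_fin_succ]
end
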